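/- Let φ₀ : (A, π₀) → (B, σ₀) be a Poisson morphism admitting a horizontal lift, and let π, σ be formal Poisson deformations of π₀ and σ₀. If H²_{CE,der}(A,B) = 0 (every closed 2-cochain in the multiderivation Chevalley–Eilenberg complex is exact), then there exists X ∈ λ·Der(B)[[λ]] such that Φ := exp(X)∘φ₀ : (A[[λ]], π) → (B[[λ]], σ) is a Poisson morphism. -/

import Mathlib

/-- A Poisson bracket on a commutative ring: an antisymmetric biderivation
satisfying the Jacobi identity. -/
structure IsPoissonBr {R : Type*} [CommRing R] (br : R → R → R) : Prop where
  add_left : ∀ x y z, br (x + y) z = br x z + br y z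
  add_right : ∀ x y z, br x (y + z) = br x y + br x z
  antisymm : ∀ x y, br x y = - br y x
  leibniz : ∀ x y z, br x (y * z) = br x y * z + y * br x z
  jacobi : ∀ x y z, br x (br y z) = br (br x y) z + br y (br x z)

/-- `D` represents an element `X ∈ λ·Der(B)[[λ]]`, i.e. a formal derivation of `B[[λ]]`
(additive, `K`-linear, Leibniz, `λ`-linear) whose zeroth order term vanishes. -/
def IsFormalDer (K : Type*) {B : Type*} [Field K] [CommRing B] [Algebra K B]
    (D : PowerSeries B → PowerSeries B) : Prop :=
  (∀ f g, D (f + g) = D f + D g) ∧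
  (∀ (c : K) (f : PowerSeries B), D (c • f) = c • D f) ∧
  (∀ f g, D (f * g) = D f * g + f * D g) ∧
  (∀ f, D (PowerSeries.X * f) = PowerSeries.X * D f) ∧
  (∀ f, PowerSeries.coeff (R := B) 0 (D f) = 0)

/-- The exponential `exp(D) = id + D + D²/2! + ⋯`, well defined in each `λ`-order. -/
noncomputable def expF (K : Type*) {B : Type*} [Field K] [CommRing B] [Algebra K B]
    (D : PowerSeries B → PowerSeries B) : PowerSeries B → PowerSeries B :=
  fun f => PowerSeries.mk fun n =>
    ∑ m ∈ Finset.range (n + 1), ((m.factorial : K)⁻¹) • PowerSeries.coeff (R := B) n (D^[m] f)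

/-!
Write `Φ = exp(D) ∘ φ₀` with `D = ∑ₖ λᵏ⁺¹ dₖ`, `dₖ ∈ Der(B)`, and choose the `dₖ` one `λ`-order at
a time. Everything is done `λ`-adically: `D` raises the order, so modulo `λᴺ⁺¹` the exponential
is the truncated sum `∑_{m ≤ N} Dᵐ/m!`, which is multiplicative by the Leibniz rule; hence `Φ` is
a ring morphism.

If the defect `σ(Φf, Φg) - Φ(π(f, g))` vanishes below order `n + 1`, its order-`(n+1)` term depends
only on the constant terms of `f` and `g`; the Jacobi identities of `π` and `σ` make it a closed
multiderivation 2-cochain on `A`. As `H² = 0` it equals `-dξ`, and replacing `dₙ` by `dₙ + δ`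
with `δ` a horizontal lift of `ξ` changes `Φ` at order `n + 1` by `δ ∘ φ₀ = ξ`, hence the
obstruction by `dξ`, without touching lower orders. The `dₖ` so obtained stabilise, and the
limiting `Φ` has vanishing defect.
-/

open PowerSeries Finset

theorem exists_forall_of_extend {α : Type*} (P : ℕ → (ℕ → α) → Prop)
    (hloc : ∀ n d e, (∀ k < n, e k = d k) → P n d → P n e) (h0 : ∃ d, P 0 d)
    (hstep : ∀ n d, P n d → ∃ e, (∀ k < n, e k = d k) ∧ P (n + 1) e) :
    ∃ d, ∀ n, P n d := by
  obtain ⟨d₀, hd₀⟩ := h0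
  choose extend extend_eq extend_spec using hstep
  let seq : (n : ℕ) → {d // P n d} := fun n =>
    Nat.rec ⟨d₀, hd₀⟩ (fun n s => ⟨extend n s.1 s.2, extend_spec n s.1 s.2⟩) n
  have seq_stable : ∀ k m, k < m → (seq m).1 k = (seq (k + 1)).1 k := by
    intro k m hkm
    induction m, hkm using Nat.le_induction with
    | base => rfl
    | succ m _ ih => exact (extend_eq m _ _ k (by omega)).trans ih
  exact ⟨fun k => (seq (k + 1)).1 k,
    fun n => hloc n _ _ (fun k hk => (seq_stable k n hk).symm) (seq n).2⟩

theorem sum_range_sum_antidiagonal_eq_sum_filter {M : Type*} [AddCommMonoid M] (N : ℕ)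
    (H : ℕ × ℕ → M) : ∑ m ∈ range (N + 1), ∑ p ∈ antidiagonal m, H p =
      ∑ p ∈ range (N + 1) ×ˢ range (N + 1) with p.1 + p.2 ≤ N, H p := by
  classical
  rw [← sum_biUnion fun m _ m' _ hne => disjoint_left.2 fun p hp hp' => hne <|
    (HasAntidiagonal.mem_antidiagonal.1 hp).symm.trans (HasAntidiagonal.mem_antidiagonal.1 hp')]
  congr 1
  ext p
  simp only [mem_biUnion, mem_range, HasAntidiagonal.mem_antidiagonal, mem_filter, mem_product,
    exists_eq_right']
  omega

theorem sum_antidiagonal_sum_antidiagonal_comm {M : Type*} [AddCommMonoid M] (n : ℕ)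
    (F : ℕ → ℕ → ℕ → M) :
    ∑ ij ∈ antidiagonal n, ∑ pq ∈ antidiagonal ij.2, F ij.1 pq.1 pq.2 =
      ∑ pj ∈ antidiagonal n, ∑ iq ∈ antidiagonal pj.2, F iq.1 pj.1 iq.2 := by
  rw [sum_sigma', sum_sigma']
  refine sum_nbij' (fun x => ⟨(x.2.1, x.1.1 + x.2.2), (x.1.1, x.2.2)⟩)
    (fun y => ⟨(y.2.1, y.1.1 + y.2.2), (y.1.1, y.2.2)⟩) ?_ ?_ ?_ ?_ fun _ _ => rfl
  all_goals
    rintro ⟨⟨i, j⟩, ⟨p, q⟩⟩ h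
    simp only [mem_sigma, HasAntidiagonal.mem_antidiagonal, and_true] at h ⊢
  · omega
  · omega
  · obtain ⟨-, rfl⟩ := h; rfl
  · obtain ⟨-, rfl⟩ := h; rfl

theorem Derivation.iterate_map_mul {R A : Type*} [CommSemiring R] [CommSemiring A] [Algebra R A]
    (D : Derivation R A A) (n : ℕ) (a b : A) :
    D^[n] (a * b) = ∑ ij ∈ antidiagonal n, n.choose ij.1 • (D^[ij.1] a * D^[ij.2] b) := by
  induction n with
  | zero => simp
  | succ n ih =>
    rw [sum_antidiagonal_choose_succ_nsmul (fun i j => D^[i] a * D^[j] b) n]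
    simp only [Function.iterate_succ_apply', ih, map_sum, map_nsmul, Derivation.leibniz,
      smul_eq_mul, smul_add, sum_add_distrib]
    congr 1
    refine sum_congr rfl fun ij hij => ?_
    rw [n.choose_symm_of_eq_add (mem_antidiagonal.1 hij).symm, mul_comm]

theorem Derivation.inv_factorial_smul_iterate_map_mul {K A : Type*} [Field K] [CharZero K]
    [CommRing A] [Algebra K A] (D : Derivation K A A) (n : ℕ) (a b : A) :
    (n.factorial : K)⁻¹ • D^[n] (a * b) = ∑ ij ∈ antidiagonal n,
      ((ij.1.factorial : K)⁻¹ • D^[ij.1] a) * ((ij.2.factorial : K)⁻¹ • D^[ij.2] b) := by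
  rw [D.iterate_map_mul, smul_sum]
  refine sum_congr rfl fun ⟨i, j⟩ hij => ?_
  obtain rfl : i + j = n := mem_antidiagonal.1 hij
  have hchoose : ((i + j).choose i : K) * i.factorial * j.factorial = (i + j).factorial := by
    have h := Nat.choose_mul_factorial_mul_factorial (Nat.le_add_right i j)
    rw [Nat.add_sub_cancel_left] at h
    exact_mod_cast h
  rw [smul_mul_smul_comm, ← Nat.cast_smul_eq_nsmul K, smul_smul]
  have hpos : ((i + j).choose i : K) ≠ 0 :=
    Nat.cast_ne_zero.2 (Nat.choose_pos (Nat.le_add_right i j)).ne'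
  congr 1
  rw [← hchoose]
  field_simp

section XAdic

variable {R : Type*} [CommRing R]

theorem X_dvd_sub_C_coeff_zero (f : R⟦X⟧) : X ∣ f - C (coeff 0 f) := by
  simp [X_dvd_iff]

theorem coeff_X_pow_mul_self (n : ℕ) (w : R⟦X⟧) : coeff n (X ^ n * w) = coeff 0 w := by
  simpa using coeff_X_pow_mul w n 0

theorem coeff_mul_of_X_pow_dvd_right {n : ℕ} (u : R⟦X⟧) {v : R⟦X⟧} (hv : X ^ n ∣ v) :
    coeff n (u * v) = coeff 0 u * coeff n v := by
  obtain ⟨w, rfl⟩ := hv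
  rw [mul_left_comm, coeff_X_pow_mul_self, coeff_X_pow_mul_self]
  simp [coeff_zero_eq_constantCoeff_apply]

theorem eq_of_forall_X_pow_succ_dvd_sub {f g : R⟦X⟧} (h : ∀ n, X ^ (n + 1) ∣ f - g) : f = g := by
  ext n
  rw [← sub_eq_zero, ← map_sub]
  exact X_pow_dvd_iff.1 (h n) _ n.lt_succ_self

theorem X_pow_succ_dvd_of_coeff_eq_zero {n : ℕ} {f : R⟦X⟧} (hf : X ^ n ∣ f) (hn : coeff n f = 0) :
    X ^ (n + 1) ∣ f :=
  X_pow_dvd_iff.2 fun m hm => (Nat.lt_succ_iff_lt_or_eq.1 hm).elim (X_pow_dvd_iff.1 hf m)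
    (fun h => h ▸ hn)

end XAdic

section FormalExp

variable {K B : Type*} [Field K] [CommRing B] [Algebra K B]

theorem coeff_expF (D : B⟦X⟧ → B⟦X⟧) (n : ℕ) (f : B⟦X⟧) :
    coeff n (expF K D f) = ∑ m ∈ range (n + 1), (m.factorial : K)⁻¹ • coeff n (D^[m] f) :=
  coeff_mk _ _

theorem coeff_zero_expF (D : B⟦X⟧ → B⟦X⟧) (f : B⟦X⟧) : coeff 0 (expF K D f) = coeff 0 f := by
  simp [coeff_expF]

variable (K) in
noncomputable def expTrunc (N : ℕ) (D : B⟦X⟧ → B⟦X⟧) (f : B⟦X⟧) : B⟦X⟧ :=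
  ∑ m ∈ range (N + 1), (m.factorial : K)⁻¹ • D^[m] f

variable {D : Derivation K B⟦X⟧ B⟦X⟧} (hX : ∀ f, D (X * f) = X * D f)
include hX

theorem Derivation.map_X_pow_mul (n : ℕ) (f : B⟦X⟧) : D (X ^ n * f) = X ^ n * D f := by
  induction n with
  | zero => simp
  | succ n ih => rw [pow_succ', mul_assoc, hX, ih, mul_assoc]

theorem X_pow_dvd_derivation {n : ℕ} {f : B⟦X⟧} (hf : X ^ n ∣ f) : X ^ n ∣ D f := by
  obtain ⟨g, rfl⟩ := hf
  exact ⟨D g, Derivation.map_X_pow_mul hX n g⟩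

theorem X_pow_dvd_iterate_sub (E : B⟦X⟧ → B⟦X⟧) {n : ℕ} (hDE : ∀ g, X ^ n ∣ D g - E g)
    (m : ℕ) (f : B⟦X⟧) : X ^ n ∣ D^[m] f - E^[m] f := by
  induction m with
  | zero => simp
  | succ m ih =>
    rw [Function.iterate_succ_apply', Function.iterate_succ_apply',
      ← sub_add_sub_cancel _ (D (E^[m] f)), ← map_sub]
    exact dvd_add (X_pow_dvd_derivation hX ih) (hDE _)

theorem X_pow_dvd_expF_sub (E : B⟦X⟧ → B⟦X⟧) {n : ℕ} (hDE : ∀ g, X ^ n ∣ D g - E g)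
    (f : B⟦X⟧) : X ^ n ∣ expF K D f - expF K E f := by
  refine X_pow_dvd_iff.2 fun j hj => ?_
  rw [map_sub, coeff_expF, coeff_expF, ← sum_sub_distrib]
  refine sum_eq_zero fun m _ => ?_
  rw [← smul_sub, ← map_sub, X_pow_dvd_iff.1 (X_pow_dvd_iterate_sub hX E hDE m f) j hj, smul_zero]

variable (h0 : ∀ f, coeff 0 (D f) = 0)
include h0

theorem X_pow_succ_dvd_derivation {n : ℕ} {f : B⟦X⟧} (hf : X ^ n ∣ f) : X ^ (n + 1) ∣ D f := by
  obtain ⟨g, rfl⟩ := hf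
  obtain ⟨h, hh⟩ : X ∣ D g := X_dvd_iff.2 (by rw [← coeff_zero_eq_constantCoeff_apply, h0])
  rw [Derivation.map_X_pow_mul hX, hh, pow_succ, ← mul_assoc]
  exact dvd_mul_right _ _

theorem X_pow_dvd_iterate (m : ℕ) (f : B⟦X⟧) : X ^ m ∣ D^[m] f := by
  induction m with
  | zero => simp
  | succ m ih =>
    rw [Function.iterate_succ_apply']
    exact X_pow_succ_dvd_derivation hX h0 ih

theorem X_pow_succ_dvd_expF_sub_expTrunc (N : ℕ) (f : B⟦X⟧) :
    X ^ (N + 1) ∣ expF K D f - expTrunc K N D f := by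
  refine X_pow_dvd_iff.2 fun j hj => ?_
  rw [map_sub, coeff_expF, expTrunc, map_sum, sub_eq_zero]
  simp only [coeff_smul]
  refine sum_subset (range_subset_range.2 (by omega)) fun m _ hm => ?_
  rw [mem_range, not_lt] at hm
  rw [X_pow_dvd_iff.1 (X_pow_dvd_iterate hX h0 m f) _ (by omega), smul_zero]

theorem X_pow_succ_dvd_expTrunc_mul_sub [CharZero K] (N : ℕ) (f g : B⟦X⟧) :
    X ^ (N + 1) ∣ expTrunc K N D f * expTrunc K N D g - expTrunc K N D (f * g) := by
  classical
  set H : ℕ × ℕ → B⟦X⟧ := fun p =>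
    ((p.1.factorial : K)⁻¹ • D^[p.1] f) * ((p.2.factorial : K)⁻¹ • D^[p.2] g)
  have hsquare :
      expTrunc K N D f * expTrunc K N D g = ∑ p ∈ range (N + 1) ×ˢ range (N + 1), H p := by
    rw [expTrunc, expTrunc, sum_mul_sum, sum_product]
  have htriangle : expTrunc K N D (f * g) =
      ∑ p ∈ range (N + 1) ×ˢ range (N + 1) with p.1 + p.2 ≤ N, H p := by
    rw [← sum_range_sum_antidiagonal_eq_sum_filter, expTrunc]
    exact sum_congr rfl fun m _ => D.inv_factorial_smul_iterate_map_mul m f g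
  rw [hsquare, htriangle, ← sum_filter_add_sum_filter_not _ (fun p => p.1 + p.2 ≤ N),
    add_sub_cancel_left]
  refine dvd_sum fun p hp => ?_
  have hp : N + 1 ≤ p.1 + p.2 := by simp only [mem_filter] at hp; omega
  have hH : X ^ (p.1 + p.2) ∣ H p := by
    rw [pow_add]
    exact mul_dvd_mul (dvd_smul_of_dvd _ (X_pow_dvd_iterate hX h0 _ f))
      (dvd_smul_of_dvd _ (X_pow_dvd_iterate hX h0 _ g))
  exact (pow_dvd_pow (X : B⟦X⟧) hp).trans hH

theorem expF_mul [CharZero K] (f g : B⟦X⟧) : expF K D (f * g) = expF K D f * expF K D g := by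
  refine eq_of_forall_X_pow_succ_dvd_sub fun N => ?_
  have hfg := X_pow_succ_dvd_expF_sub_expTrunc hX h0 N (f * g)
  have hprod := dvd_mul_sub_mul (X_pow_succ_dvd_expF_sub_expTrunc hX h0 N f)
    (X_pow_succ_dvd_expF_sub_expTrunc hX h0 N g)
  have htrunc := X_pow_succ_dvd_expTrunc_mul_sub hX h0 N f g
  have e : expF K D (f * g) - expF K D f * expF K D g =
      (expF K D (f * g) - expTrunc K N D (f * g)) -
        (expTrunc K N D f * expTrunc K N D g - expTrunc K N D (f * g)) -
        (expF K D f * expF K D g - expTrunc K N D f * expTrunc K N D g) := by ring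
  rw [e]
  exact dvd_sub (dvd_sub hfg htrunc) hprod

theorem X_pow_dvd_expF_add_sub {E : Derivation K B⟦X⟧ B⟦X⟧} (hXE : ∀ f, E (X * f) = X * E f)
    {k : ℕ} (hE : ∀ g, X ^ (k + 1) ∣ E g) (f : B⟦X⟧) :
    X ^ (k + 2) ∣ expF K ⇑(D + E) f - expF K D f - E f := by
  have hX' : ∀ f, (D + E) (X * f) = X * (D + E) f := fun f => by
    rw [Derivation.add_apply, Derivation.add_apply, hX, hXE, mul_add]
  have h0' : ∀ f, coeff 0 ((D + E) f) = 0 := fun f => by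
    rw [Derivation.add_apply, map_add, h0, X_pow_dvd_iff.1 (hE f) _ k.succ_pos, add_zero]
  have hiter : ∀ m, X ^ (k + 1 + m) ∣ (⇑(D + E))^[m + 1] f - D^[m + 1] f := by
    intro m
    induction m with
    | zero => simpa using hE f
    | succ m ih =>
      have hEiter : X ^ (k + 1 + (m + 1)) ∣ E (D^[m + 1] f) := by
        obtain ⟨w, hw⟩ := X_pow_dvd_iterate hX h0 (m + 1) f
        rw [hw, Derivation.map_X_pow_mul hXE, add_comm, pow_add]
        exact mul_dvd_mul_left _ (hE w)
      have e : (⇑(D + E))^[m + 1 + 1] f - D^[m + 1 + 1] f =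
          (D + E) ((⇑(D + E))^[m + 1] f - D^[m + 1] f) + E (D^[m + 1] f) := by
        rw [Function.iterate_succ_apply', Function.iterate_succ_apply' (⇑D), map_sub]
        simp only [Derivation.add_apply]
        ring
      rw [e, ← add_assoc]
      exact dvd_add (X_pow_succ_dvd_derivation hX' h0' ih) hEiter
  have htrunc : X ^ (k + 2) ∣ expTrunc K (k + 1) (⇑(D + E)) f - expTrunc K (k + 1) D f - E f := by
    rw [expTrunc, expTrunc, ← sum_sub_distrib, sum_range_succ', sum_range_succ']
    simp only [← smul_sub, Function.iterate_zero_apply, sub_self, add_zero, zero_add,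
      Nat.factorial_one, Nat.cast_one, inv_one, one_smul, Function.iterate_one,
      Derivation.add_apply, add_sub_cancel_left, add_sub_cancel_right]
    refine dvd_sum fun m _ => dvd_smul_of_dvd _ ((pow_dvd_pow X (by omega)).trans (hiter (m + 1)))
  have e : expF K ⇑(D + E) f - expF K D f - E f =
      (expF K ⇑(D + E) f - expTrunc K (k + 1) (⇑(D + E)) f) -
        (expF K D f - expTrunc K (k + 1) D f) +
        (expTrunc K (k + 1) (⇑(D + E)) f - expTrunc K (k + 1) D f - E f) := by ring
  rw [e]
  exact dvd_add (dvd_sub (X_pow_succ_dvd_expF_sub_expTrunc hX' h0' (k + 1) f)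
    (X_pow_succ_dvd_expF_sub_expTrunc hX h0 (k + 1) f)) htrunc

end FormalExp

section ExpRingHom

variable {K B : Type*} [Field K] [CommRing B] [Algebra K B]

theorem expF_add (D : Derivation K B⟦X⟧ B⟦X⟧) (f g : B⟦X⟧) :
    expF K D (f + g) = expF K D f + expF K D g := by
  ext n
  simp only [coeff_expF, map_add, iterate_map_add, smul_add, sum_add_distrib]

theorem expF_eq_self_of_map_eq_zero (D : Derivation K B⟦X⟧ B⟦X⟧) {f : B⟦X⟧} (hf : D f = 0) :
    expF K D f = f := by
  ext n
  rw [coeff_expF, sum_eq_single 0]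
  · simp
  · intro m _ hm
    obtain ⟨m, rfl⟩ := Nat.exists_eq_succ_of_ne_zero hm
    rw [Function.iterate_succ_apply, hf, iterate_map_zero, map_zero, smul_zero]
  · simp

noncomputable def expRingHom [CharZero K] (D : Derivation K B⟦X⟧ B⟦X⟧)
    (hX : ∀ f, D (X * f) = X * D f) (h0 : ∀ f, coeff 0 (D f) = 0) : B⟦X⟧ →+* B⟦X⟧ :=
  RingHom.mk' ⟨⟨expF K D, expF_eq_self_of_map_eq_zero D D.map_one_eq_zero⟩, expF_mul hX h0⟩
    (expF_add D)

end ExpRingHom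

section DerivationSeries

variable {K B : Type*} [Field K] [CommRing B] [Algebra K B]

/-- The derivation `∑ₖ λᵏ dₖ` of `B⟦X⟧`, an element of `Der(B)[[λ]]`. -/
noncomputable def derivationSeries (d : ℕ → Derivation K B B) : Derivation K B⟦X⟧ B⟦X⟧ :=
  Derivation.mk'
    { toFun := fun f => mk fun n => ∑ p ∈ antidiagonal n, d p.1 (coeff p.2 f)
      map_add' := fun f g => by ext n; simp [sum_add_distrib]
      map_smul' := fun c f => by ext n; simp [smul_sum] }
    fun f g => by
      ext n
      simp only [LinearMap.coe_mk, AddHom.coe_mk, smul_eq_mul, map_add, coeff_mk, coeff_mul,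
        map_sum, Derivation.leibniz, mul_sum, sum_add_distrib]
      congr 1
      · exact sum_antidiagonal_sum_antidiagonal_comm n fun i p q => coeff p f * d i (coeff q g)
      · simp_rw [← Nat.sum_antidiagonal_swap (f := fun pq => coeff pq.2 g * _), Prod.fst_swap,
          Prod.snd_swap]
        exact sum_antidiagonal_sum_antidiagonal_comm n fun i q p => coeff q g * d i (coeff p f)

theorem coeff_derivationSeries (d : ℕ → Derivation K B B) (n : ℕ) (f : B⟦X⟧) :
    coeff n (derivationSeries d f) = ∑ p ∈ antidiagonal n, d p.1 (coeff p.2 f) := by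
  simp [derivationSeries]

theorem derivationSeries_X_mul (d : ℕ → Derivation K B B) (f : B⟦X⟧) :
    derivationSeries d (X * f) = X * derivationSeries d f := by
  ext n
  cases n with
  | zero => simp only [coeff_zero_X_mul, coeff_derivationSeries, Nat.antidiagonal_zero,
      sum_singleton, map_zero]
  | succ n =>
    rw [coeff_succ_X_mul, coeff_derivationSeries, coeff_derivationSeries,
      Nat.sum_antidiagonal_succ']
    simp [coeff_succ_X_mul]

theorem derivationSeries_add (d e : ℕ → Derivation K B B) :
    derivationSeries (d + e) = derivationSeries d + derivationSeries e := by
  ext f n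
  simp [coeff_derivationSeries, sum_add_distrib]

theorem X_pow_dvd_derivationSeries {d : ℕ → Derivation K B B} {n : ℕ} (hd : ∀ k < n, d k = 0)
    (f : B⟦X⟧) : X ^ n ∣ derivationSeries d f := by
  refine X_pow_dvd_iff.2 fun m hm => ?_
  rw [coeff_derivationSeries]
  refine sum_eq_zero fun p hp => ?_
  rw [hd p.1 (by have := HasAntidiagonal.mem_antidiagonal.1 hp; omega), Derivation.zero_apply]

theorem coeff_derivationSeries_single (n : ℕ) (δ : Derivation K B B) (f : B⟦X⟧) :
    coeff n (derivationSeries (Pi.single n δ) f) = δ (coeff 0 f) := by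
  rw [coeff_derivationSeries, sum_eq_single (n, 0)]
  · simp
  · rintro ⟨i, j⟩ hij hne
    have hi : i ≠ n := fun h => hne (by simp_all)
    simp [hi]
  · simp

/-- A general element `λ · ∑ₖ λᵏ dₖ` of `λ·Der(B)[[λ]]`. -/
noncomputable def formalDerivation (d : ℕ → Derivation K B B) : Derivation K B⟦X⟧ B⟦X⟧ :=
  (X : B⟦X⟧) • derivationSeries d

theorem formalDerivation_apply (d : ℕ → Derivation K B B) (f : B⟦X⟧) :
    formalDerivation d f = X * derivationSeries d f :=
  rfl

theorem formalDerivation_X_mul (d : ℕ → Derivation K B B) (f : B⟦X⟧) :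
    formalDerivation d (X * f) = X * formalDerivation d f := by
  rw [formalDerivation_apply, formalDerivation_apply, derivationSeries_X_mul]

theorem coeff_zero_formalDerivation (d : ℕ → Derivation K B B) (f : B⟦X⟧) :
    coeff 0 (formalDerivation d f) = 0 := by
  rw [formalDerivation_apply, coeff_zero_X_mul]

theorem formalDerivation_add (d e : ℕ → Derivation K B B) :
    formalDerivation (d + e) = formalDerivation d + formalDerivation e := by
  rw [formalDerivation, derivationSeries_add, smul_add]; rfl

theorem X_pow_succ_dvd_formalDerivation {d : ℕ → Derivation K B B} {n : ℕ}
    (hd : ∀ k < n, d k = 0) (f : B⟦X⟧) : X ^ (n + 1) ∣ formalDerivation d f := by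
  rw [formalDerivation_apply, pow_succ']
  exact mul_dvd_mul_left X (X_pow_dvd_derivationSeries hd f)

theorem coeff_succ_formalDerivation_single (n : ℕ) (δ : Derivation K B B) (f : B⟦X⟧) :
    coeff (n + 1) (formalDerivation (Pi.single n δ) f) = δ (coeff 0 f) := by
  rw [formalDerivation_apply, coeff_succ_X_mul, coeff_derivationSeries_single]

theorem isFormalDer_formalDerivation (d : ℕ → Derivation K B B) :
    IsFormalDer K (formalDerivation d) :=
  ⟨map_add _, (formalDerivation d).map_smul, fun f g => by
    rw [Derivation.leibniz, smul_eq_mul, smul_eq_mul]; ring, formalDerivation_X_mul d,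
    coeff_zero_formalDerivation d⟩

end DerivationSeries

namespace IsPoissonBr

variable {R : Type*} [CommRing R] {br : R → R → R} (h : IsPoissonBr br)
include h

theorem zero_right (x : R) : br x 0 = 0 := by
  simpa using h.add_right x 0 0

theorem neg_right (x y : R) : br x (-y) = -br x y := by
  rw [eq_neg_iff_add_eq_zero, ← h.add_right, neg_add_cancel, h.zero_right]

theorem neg_left (x y : R) : br (-x) y = -br x y := by
  rw [h.antisymm, h.neg_right, h.antisymm y x, neg_neg]

theorem sub_right (x y z : R) : br x (y - z) = br x y - br x z := by
  rw [sub_eq_add_neg, h.add_right, h.neg_right, sub_eq_add_neg]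

theorem sub_left (x y z : R) : br (x - y) z = br x z - br y z := by
  rw [sub_eq_add_neg, h.add_left, h.neg_left, sub_eq_add_neg]

theorem leibniz_left (x y z : R) : br (x * y) z = x * br y z + br x z * y := by
  rw [h.antisymm, h.leibniz, h.antisymm z x, h.antisymm z y]
  ring

theorem cyclic (x y z : R) : br x (br y z) + br y (br z x) + br z (br x y) = 0 := by
  rw [h.jacobi x y z, h.antisymm z x, h.neg_right, h.antisymm z (br x y)]
  ring

end IsPoissonBr

structure IsPoissonDeformation {R : Type*} [CommRing R] (br₀ : R → R → R)
    (br : R⟦X⟧ → R⟦X⟧ → R⟦X⟧) : Prop extends IsPoissonBr br where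
  X_mul_left : ∀ f g, br (X * f) g = X * br f g
  coeff_zero_C_C : ∀ a b, coeff 0 (br (C a) (C b)) = br₀ a b

namespace IsPoissonDeformation

variable {R : Type*} [CommRing R] {br₀ : R → R → R} {br : R⟦X⟧ → R⟦X⟧ → R⟦X⟧}
  (h : IsPoissonDeformation br₀ br)
include h

theorem X_pow_mul_left (n : ℕ) (f g : R⟦X⟧) : br (X ^ n * f) g = X ^ n * br f g := by
  induction n with
  | zero => simp
  | succ n ih => rw [pow_succ', mul_assoc, h.X_mul_left, ih, mul_assoc]

theorem X_pow_mul_right (n : ℕ) (f g : R⟦X⟧) : br f (X ^ n * g) = X ^ n * br f g := by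
  rw [h.antisymm, h.X_pow_mul_left, h.antisymm g, mul_neg, neg_neg]

theorem X_pow_dvd_left {n : ℕ} {u : R⟦X⟧} (hu : X ^ n ∣ u) (v : R⟦X⟧) : X ^ n ∣ br u v := by
  obtain ⟨w, rfl⟩ := hu
  exact ⟨br w v, h.X_pow_mul_left n w v⟩

theorem X_pow_dvd_right {n : ℕ} (u : R⟦X⟧) {v : R⟦X⟧} (hv : X ^ n ∣ v) : X ^ n ∣ br u v := by
  obtain ⟨w, rfl⟩ := hv
  exact ⟨br u w, h.X_pow_mul_right n u w⟩

theorem X_pow_dvd_sub {n : ℕ} {u u' v v' : R⟦X⟧} (hu : X ^ n ∣ u - u') (hv : X ^ n ∣ v - v') :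
    X ^ n ∣ br u v - br u' v' := by
  have e : br u v - br u' v' = br (u - u') v + br u' (v - v') := by
    rw [h.sub_left, h.sub_right]; ring
  rw [e]
  exact dvd_add (h.X_pow_dvd_left hu v) (h.X_pow_dvd_right u' hv)

theorem coeff_zero (u v : R⟦X⟧) : coeff 0 (br u v) = br₀ (coeff 0 u) (coeff 0 v) := by
  have hdvd : X ^ 1 ∣ br u v - br (C (coeff 0 u)) (C (coeff 0 v)) :=
    h.X_pow_dvd_sub (by simpa using X_dvd_sub_C_coeff_zero u)
      (by simpa using X_dvd_sub_C_coeff_zero v)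
  rw [← h.coeff_zero_C_C, ← sub_eq_zero, ← map_sub]
  exact X_pow_dvd_iff.1 hdvd 0 one_pos

theorem antisymm₀ (a b : R) : br₀ a b = -br₀ b a := by
  rw [← h.coeff_zero_C_C, h.antisymm, map_neg, h.coeff_zero_C_C]

theorem neg_right₀ (a b : R) : br₀ a (-b) = -br₀ a b := by
  rw [← h.coeff_zero_C_C, map_neg, h.neg_right, map_neg, h.coeff_zero_C_C]

theorem coeff_of_X_pow_dvd_left {n : ℕ} {u : R⟦X⟧} (hu : X ^ n ∣ u) (v : R⟦X⟧) :
    coeff n (br u v) = br₀ (coeff n u) (coeff 0 v) := by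
  obtain ⟨w, rfl⟩ := hu
  rw [h.X_pow_mul_left, coeff_X_pow_mul_self, coeff_X_pow_mul_self, h.coeff_zero]

theorem coeff_of_X_pow_dvd_right {n : ℕ} (u : R⟦X⟧) {v : R⟦X⟧} (hv : X ^ n ∣ v) :
    coeff n (br u v) = br₀ (coeff 0 u) (coeff n v) := by
  obtain ⟨w, rfl⟩ := hv
  rw [h.X_pow_mul_right, coeff_X_pow_mul_self, coeff_X_pow_mul_self, h.coeff_zero]

end IsPoissonDeformation

section PoissonDefect

variable {R S : Type*} [CommRing R] [CommRing S]

def poissonDefect (π : R → R → R) (σ : S → S → S) (Φ : R →+* S) (x y : R) : S :=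
  σ (Φ x) (Φ y) - Φ (π x y)

variable {π : R → R → R} {σ : S → S → S} (hπ : IsPoissonBr π) (hσ : IsPoissonBr σ)
  (Φ : R →+* S)
include hπ hσ

theorem poissonDefect_add_left (x y z : R) :
    poissonDefect π σ Φ (x + y) z = poissonDefect π σ Φ x z + poissonDefect π σ Φ y z := by
  simp only [poissonDefect, map_add, hσ.add_left, hπ.add_left]
  ring

theorem poissonDefect_antisymm (x y : R) :
    poissonDefect π σ Φ x y = -poissonDefect π σ Φ y x := by
  simp only [poissonDefect, hσ.antisymm (Φ x), hπ.antisymm x, map_neg]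
  ring

theorem poissonDefect_sub_left (x y z : R) :
    poissonDefect π σ Φ (x - y) z = poissonDefect π σ Φ x z - poissonDefect π σ Φ y z := by
  rw [eq_sub_iff_add_eq, ← poissonDefect_add_left hπ hσ, sub_add_cancel]

theorem poissonDefect_mul_left (x y z : R) :
    poissonDefect π σ Φ (x * y) z =
      Φ x * poissonDefect π σ Φ y z + poissonDefect π σ Φ x z * Φ y := by
  simp only [poissonDefect, map_mul, hσ.leibniz_left, hπ.leibniz_left, map_add]
  ring

theorem poissonDefect_cyclic (x y z : R) :
    σ (Φ x) (poissonDefect π σ Φ y z) + σ (Φ y) (poissonDefect π σ Φ z x) +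
      σ (Φ z) (poissonDefect π σ Φ x y) + poissonDefect π σ Φ x (π y z) +
        poissonDefect π σ Φ y (π z x) + poissonDefect π σ Φ z (π x y) = 0 := by
  have hΦπ : Φ (π x (π y z)) + Φ (π y (π z x)) + Φ (π z (π x y)) = 0 := by
    rw [← map_add, ← map_add, hπ.cyclic, map_zero]
  simp only [poissonDefect, hσ.sub_right]
  linear_combination hσ.cyclic (Φ x) (Φ y) (Φ z) - hΦπ

end PoissonDefect

structure IsRingHomDeformation {A B : Type*} [CommRing A] [CommRing B] (φ₀ : A →+* B)
    (Φ : A⟦X⟧ →+* B⟦X⟧) : Prop where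
  map_X : Φ X = X
  coeff_zero_map : ∀ f, coeff 0 (Φ f) = φ₀ (coeff 0 f)

section Obstruction

variable {A B : Type*} [CommRing A] [CommRing B] {π₀ : A → A → A} {σ₀ : B → B → B}
  {π : A⟦X⟧ → A⟦X⟧ → A⟦X⟧} {σ : B⟦X⟧ → B⟦X⟧ → B⟦X⟧}
  (hπ : IsPoissonDeformation π₀ π) (hσ : IsPoissonDeformation σ₀ σ)
  {φ₀ : A →+* B} {Φ : A⟦X⟧ →+* B⟦X⟧} (hΦ : IsRingHomDeformation φ₀ Φ)

/-- The Chevalley–Eilenberg differential of a 1-cochain `ξ : A → B` along `φ₀`. -/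
def ceDiff (π₀ : A → A → A) (σ₀ : B → B → B) (φ₀ : A →+* B) (ξ : A → B) (a b : A) : B :=
  σ₀ (φ₀ a) (ξ b) - σ₀ (φ₀ b) (ξ a) - ξ (π₀ a b)

noncomputable def obstruction (π : A⟦X⟧ → A⟦X⟧ → A⟦X⟧) (σ : B⟦X⟧ → B⟦X⟧ → B⟦X⟧) (Φ : A⟦X⟧ →+* B⟦X⟧)
    (N : ℕ) (a b : A) : B :=
  coeff N (poissonDefect π σ Φ (C a) (C b))

include hσ in
theorem X_pow_dvd_poissonDefect_sub {Ψ : A⟦X⟧ →+* B⟦X⟧} {n : ℕ} (h : ∀ f, X ^ n ∣ Ψ f - Φ f)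
    (f g : A⟦X⟧) : X ^ n ∣ poissonDefect π σ Ψ f g - poissonDefect π σ Φ f g := by
  have e : poissonDefect π σ Ψ f g - poissonDefect π σ Φ f g =
      (σ (Ψ f) (Ψ g) - σ (Φ f) (Φ g)) - (Ψ (π f g) - Φ (π f g)) := by
    simp only [poissonDefect]; ring
  rw [e]
  exact dvd_sub (hσ.X_pow_dvd_sub (h f) (h g)) (h _)

include hπ hσ

theorem obstruction_antisymm (N : ℕ) (a b : A) :
    obstruction π σ Φ N a b = -obstruction π σ Φ N b a := by
  rw [obstruction, obstruction, poissonDefect_antisymm hπ.1 hσ.1, map_neg]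

theorem obstruction_add_left (N : ℕ) (a b c : A) :
    obstruction π σ Φ N (a + b) c = obstruction π σ Φ N a c + obstruction π σ Φ N b c := by
  rw [obstruction, map_add, poissonDefect_add_left hπ.1 hσ.1, map_add, obstruction, obstruction]

include hΦ

theorem poissonDefect_X_mul_left (f g : A⟦X⟧) :
    poissonDefect π σ Φ (X * f) g = X * poissonDefect π σ Φ f g := by
  simp only [poissonDefect, map_mul, hΦ.map_X, hσ.X_mul_left, hπ.X_mul_left]
  ring

theorem X_dvd_poissonDefect (hφ₀ : ∀ a b, φ₀ (π₀ a b) = σ₀ (φ₀ a) (φ₀ b)) (f g : A⟦X⟧) :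
    X ∣ poissonDefect π σ Φ f g := by
  rw [X_dvd_iff, ← coeff_zero_eq_constantCoeff_apply, poissonDefect, map_sub, hσ.coeff_zero,
    hΦ.coeff_zero_map, hΦ.coeff_zero_map, hΦ.coeff_zero_map, hπ.coeff_zero, hφ₀, sub_self]

theorem coeff_poissonDefect_eq_obstruction {N : ℕ}
    (hN : ∀ f g, X ^ N ∣ poissonDefect π σ Φ f g) (f g : A⟦X⟧) :
    coeff N (poissonDefect π σ Φ f g) = obstruction π σ Φ N (coeff 0 f) (coeff 0 g) := by
  have hX : ∀ u v, X ^ (N + 1) ∣ poissonDefect π σ Φ (u - C (coeff 0 u)) v := by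
    intro u v
    obtain ⟨w, hw⟩ := X_dvd_sub_C_coeff_zero u
    rw [hw, poissonDefect_X_mul_left hπ hσ hΦ, pow_succ']
    exact mul_dvd_mul_left X (hN w v)
  have hdvd : X ^ (N + 1) ∣ poissonDefect π σ Φ f g -
      poissonDefect π σ Φ (C (coeff 0 f)) (C (coeff 0 g)) := by
    have e : poissonDefect π σ Φ f g - poissonDefect π σ Φ (C (coeff 0 f)) (C (coeff 0 g)) =
        poissonDefect π σ Φ (f - C (coeff 0 f)) g -
          poissonDefect π σ Φ (g - C (coeff 0 g)) (C (coeff 0 f)) := by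
      rw [poissonDefect_sub_left hπ.1 hσ.1, poissonDefect_sub_left hπ.1 hσ.1,
        poissonDefect_antisymm hπ.1 hσ.1 Φ g, poissonDefect_antisymm hπ.1 hσ.1 Φ (C _) (C _)]
      ring
    rw [e]
    exact dvd_sub (hX f g) (hX g _)
  rw [obstruction, ← sub_eq_zero, ← map_sub]
  exact X_pow_dvd_iff.1 hdvd N N.lt_succ_self

theorem obstruction_mul_left {N : ℕ} (hN : ∀ f g, X ^ N ∣ poissonDefect π σ Φ f g) (a b c : A) :
    obstruction π σ Φ N (a * b) c =
      φ₀ a * obstruction π σ Φ N b c + obstruction π σ Φ N a c * φ₀ b := by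
  rw [obstruction, map_mul, poissonDefect_mul_left hπ.1 hσ.1, map_add,
    coeff_mul_of_X_pow_dvd_right _ (hN _ _), mul_comm _ (Φ (C b)),
    coeff_mul_of_X_pow_dvd_right _ (hN _ _), hΦ.coeff_zero_map, hΦ.coeff_zero_map, coeff_zero_C,
    coeff_zero_C, obstruction, obstruction, mul_comm (φ₀ b)]

theorem obstruction_cyclic {N : ℕ} (hN : ∀ f g, X ^ N ∣ poissonDefect π σ Φ f g) (a b c : A) :
    σ₀ (φ₀ a) (obstruction π σ Φ N b c) + σ₀ (φ₀ b) (obstruction π σ Φ N c a) +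
      σ₀ (φ₀ c) (obstruction π σ Φ N a b) + obstruction π σ Φ N a (π₀ b c) +
        obstruction π σ Φ N b (π₀ c a) + obstruction π σ Φ N c (π₀ a b) = 0 := by
  have hσterm : ∀ x y z, coeff N (σ (Φ (C x)) (poissonDefect π σ Φ (C y) (C z))) =
      σ₀ (φ₀ x) (obstruction π σ Φ N y z) := by
    intro x y z
    rw [hσ.coeff_of_X_pow_dvd_right _ (hN _ _), hΦ.coeff_zero_map, coeff_zero_C, obstruction]
  have hπterm : ∀ x y z, coeff N (poissonDefect π σ Φ (C x) (π (C y) (C z))) =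
      obstruction π σ Φ N x (π₀ y z) := by
    intro x y z
    rw [coeff_poissonDefect_eq_obstruction hπ hσ hΦ hN, coeff_zero_C, hπ.coeff_zero_C_C]
  have h := congrArg (coeff N) (poissonDefect_cyclic hπ.1 hσ.1 Φ (C a) (C b) (C c))
  simpa only [map_add, map_zero, hσterm, hπterm] using h

theorem obstruction_eq_add_ceDiff {Ψ : A⟦X⟧ →+* B⟦X⟧} (hΨ : IsRingHomDeformation φ₀ Ψ)
    {N : ℕ} {ξ : A → B} (hdvd : ∀ f, X ^ N ∣ Ψ f - Φ f)
    (hξ : ∀ f, coeff N (Ψ f - Φ f) = ξ (coeff 0 f)) (a b : A) :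
    obstruction π σ Ψ N a b = obstruction π σ Φ N a b + ceDiff π₀ σ₀ φ₀ ξ a b := by
  have e : poissonDefect π σ Ψ (C a) (C b) = poissonDefect π σ Φ (C a) (C b) +
      σ (Ψ (C a) - Φ (C a)) (Ψ (C b)) + σ (Φ (C a)) (Ψ (C b) - Φ (C b)) -
        (Ψ (π (C a) (C b)) - Φ (π (C a) (C b))) := by
    simp only [poissonDefect, hσ.sub_left, hσ.sub_right]
    ring
  rw [obstruction, e, map_sub, map_add, map_add, hσ.coeff_of_X_pow_dvd_left (hdvd _),
    hσ.coeff_of_X_pow_dvd_right _ (hdvd _), hξ, hξ, hξ, hΨ.coeff_zero_map, hΦ.coeff_zero_map,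
    coeff_zero_C, coeff_zero_C, hπ.coeff_zero_C_C, ceDiff, hσ.antisymm₀ (ξ a), obstruction]
  ring

end Obstruction

section ExpMap

variable {K A B : Type*} [Field K] [CharZero K] [CommRing A] [CommRing B] [Algebra K B]
  (φ₀ : A →+* B)

noncomputable def expMap (d : ℕ → Derivation K B B) : A⟦X⟧ →+* B⟦X⟧ :=
  (expRingHom (formalDerivation d) (formalDerivation_X_mul d)
    (coeff_zero_formalDerivation d)).comp (map φ₀)

theorem expMap_apply (d : ℕ → Derivation K B B) (f : A⟦X⟧) :
    expMap φ₀ d f = expF K (formalDerivation d) (map φ₀ f) :=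
  rfl

theorem isRingHomDeformation_expMap (d : ℕ → Derivation K B B) :
    IsRingHomDeformation φ₀ (expMap φ₀ d) where
  map_X := by
    have hX : formalDerivation d X = 0 := by
      simpa using formalDerivation_X_mul d 1
    rw [expMap_apply, map_X, expF_eq_self_of_map_eq_zero _ hX]
  coeff_zero_map f := by rw [expMap_apply, coeff_zero_expF, coeff_map]

theorem X_pow_succ_dvd_expMap_sub {d e : ℕ → Derivation K B B} {n : ℕ}
    (hde : ∀ k < n, e k = d k) (f : A⟦X⟧) : X ^ (n + 1) ∣ expMap φ₀ e f - expMap φ₀ d f := by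
  refine X_pow_dvd_expF_sub (formalDerivation_X_mul e) _ (fun g => ?_) _
  rw [← add_sub_cancel d e, formalDerivation_add, Derivation.add_apply, add_sub_cancel_left]
  exact X_pow_succ_dvd_formalDerivation (fun k hk => by simp [hde k hk]) g

theorem coeff_succ_expMap_add_single_sub (d : ℕ → Derivation K B B) (n : ℕ)
    (δ : Derivation K B B) (f : A⟦X⟧) :
    coeff (n + 1) (expMap φ₀ (d + Pi.single n δ) f - expMap φ₀ d f) = δ (φ₀ (coeff 0 f)) := by
  have h := X_pow_dvd_expF_add_sub (formalDerivation_X_mul d) (coeff_zero_formalDerivation d)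
    (formalDerivation_X_mul (Pi.single n δ))
    (X_pow_succ_dvd_formalDerivation fun k hk => Pi.single_eq_of_ne hk.ne _) (map φ₀ f)
  rw [← formalDerivation_add, ← expMap_apply, ← expMap_apply] at h
  rw [← sub_add_cancel (_ - _) (formalDerivation (Pi.single n δ) (map φ₀ f)), map_add,
    X_pow_dvd_iff.1 h _ (by omega), zero_add, coeff_succ_formalDerivation_single,
    coeff_map]

end ExpMap

section Step

variable {K A B : Type*} [Field K] [CharZero K] [CommRing A] [CommRing B] [Algebra K B]
  {π₀ : A → A → A} {σ₀ : B → B → B} {π : A⟦X⟧ → A⟦X⟧ → A⟦X⟧} {σ : B⟦X⟧ → B⟦X⟧ → B⟦X⟧}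
  (hπ : IsPoissonDeformation π₀ π) (hσ : IsPoissonDeformation σ₀ σ) {φ₀ : A →+* B}

include hσ in
theorem X_pow_succ_dvd_poissonDefect_expMap_of_agree {d e : ℕ → Derivation K B B} {n : ℕ}
    (hde : ∀ k < n, e k = d k) (hd : ∀ f g, X ^ (n + 1) ∣ poissonDefect π σ (expMap φ₀ d) f g)
    (f g : A⟦X⟧) : X ^ (n + 1) ∣ poissonDefect π σ (expMap φ₀ e) f g := by
  have h := X_pow_dvd_poissonDefect_sub (π := π) hσ (X_pow_succ_dvd_expMap_sub φ₀ hde) f g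
  simpa using dvd_add h (hd f g)

include hπ hσ

theorem X_pow_dvd_poissonDefect_expMap_add_single {d : ℕ → Derivation K B B} {n : ℕ}
    (hd : ∀ f g, X ^ (n + 1) ∣ poissonDefect π σ (expMap φ₀ d) f g) {ξ : A → B}
    (hξ : ∀ a b, -obstruction π σ (expMap φ₀ d) (n + 1) a b = ceDiff π₀ σ₀ φ₀ ξ a b)
    {δ : Derivation K B B} (hδ : ∀ a, δ (φ₀ a) = ξ a) (f g : A⟦X⟧) :
    X ^ (n + 2) ∣ poissonDefect π σ (expMap φ₀ (d + Pi.single n δ)) f g := by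
  have hagree : ∀ k < n, (d + Pi.single n δ : ℕ → Derivation K B B) k = d k := fun k hk => by
    simp [Pi.single_eq_of_ne hk.ne]
  have hdvd := X_pow_succ_dvd_poissonDefect_expMap_of_agree hσ hagree hd
  have hobs : ∀ a b, obstruction π σ (expMap φ₀ (d + Pi.single n δ)) (n + 1) a b = 0 := by
    intro a b
    rw [obstruction_eq_add_ceDiff hπ hσ (isRingHomDeformation_expMap φ₀ d)
      (isRingHomDeformation_expMap φ₀ _) (X_pow_succ_dvd_expMap_sub φ₀ hagree)
      (fun f => by rw [coeff_succ_expMap_add_single_sub, hδ]), ← hξ, add_neg_cancel]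
  refine X_pow_succ_dvd_of_coeff_eq_zero (hdvd f g) ?_
  rw [coeff_poissonDefect_eq_obstruction hπ hσ (isRingHomDeformation_expMap φ₀ _) hdvd, hobs]

end Step

theorem stmt_9_general {K A B : Type*} [Field K] [CharZero K] [CommRing A] [CommRing B]
    [Algebra K B]
    (π₀ : A → A → A) (σ₀ : B → B → B)
    (φ₀ : A →+* B) (hφ₀ : ∀ x y, φ₀ (π₀ x y) = σ₀ (φ₀ x) (φ₀ y))
    -- a horizontal lift along φ₀ : an A-linear right inverse of φ₀* on 1-cochains
    (hl : (A → B) → Derivation K B B)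
    (hlsec : ∀ ξ : A → B,
      (∀ x y, ξ (x + y) = ξ x + ξ y) →
      (∀ x y, ξ (x * y) = φ₀ x * ξ y + ξ x * φ₀ y) →
      ∀ a, hl ξ (φ₀ a) = ξ a)
    -- H²_{CE,der}(A,B) = 0 : closed multiderivation 2-cochains are exact
    (hH2 : ∀ R : A → A → B,
      (∀ x y, R x y = - R y x) →
      (∀ x y z, R (x + y) z = R x z + R y z) →
      (∀ x y z, R (x * y) z = φ₀ x * R y z + R x z * φ₀ y) →
      (∀ a₁ a₂ a₃,
        σ₀ (φ₀ a₁) (R a₂ a₃) + σ₀ (φ₀ a₂) (R a₃ a₁) + σ₀ (φ₀ a₃) (R a₁ a₂)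
        + R a₁ (π₀ a₂ a₃) + R a₂ (π₀ a₃ a₁) + R a₃ (π₀ a₁ a₂) = 0) →
      ∃ ξ : A → B,
        (∀ x y, ξ (x + y) = ξ x + ξ y) ∧
        (∀ x y, ξ (x * y) = φ₀ x * ξ y + ξ x * φ₀ y) ∧
        ∀ a₁ a₂, R a₁ a₂ =
          σ₀ (φ₀ a₁) (ξ a₂) - σ₀ (φ₀ a₂) (ξ a₁) - ξ (π₀ a₁ a₂))
    -- formal Poisson deformations of π₀ and σ₀
    (π : PowerSeries A → PowerSeries A → PowerSeries A)
    (σ : PowerSeries B → PowerSeries B → PowerSeries B)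
    (hπ : IsPoissonBr π) (hσ : IsPoissonBr σ)
    (hπX : ∀ f g, π (PowerSeries.X * f) g = PowerSeries.X * π f g)
    (hσX : ∀ f g, σ (PowerSeries.X * f) g = PowerSeries.X * σ f g)
    (hπ0 : ∀ a b : A, PowerSeries.coeff (R := A) 0 (π (PowerSeries.C (R := A) a) (PowerSeries.C (R := A) b))
       = π₀ a b)
    (hσ0 : ∀ a b : B, PowerSeries.coeff (R := B) 0 (σ (PowerSeries.C (R := B) a) (PowerSeries.C (R := B) b))
       = σ₀ a b) :
    ∃ D : PowerSeries B → PowerSeries B, IsFormalDer K D ∧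
      ∀ f g : PowerSeries A,
        expF K D (PowerSeries.map (φ₀ : A →+* B) (π f g)) =
          σ (expF K D (PowerSeries.map (φ₀ : A →+* B) f))
            (expF K D (PowerSeries.map (φ₀ : A →+* B) g)) := by
  have hπ' : IsPoissonDeformation π₀ π := ⟨hπ, hπX, hπ0⟩
  have hσ' : IsPoissonDeformation σ₀ σ := ⟨hσ, hσX, hσ0⟩
  obtain ⟨d, hd⟩ := exists_forall_of_extend
    (fun n (d : ℕ → Derivation K B B) => ∀ f g, X ^ (n + 1) ∣ poissonDefect π σ (expMap φ₀ d) f g)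
    (fun n d e hde hd => X_pow_succ_dvd_poissonDefect_expMap_of_agree hσ' hde hd)
    ⟨0, fun f g => by
      simpa using X_dvd_poissonDefect hπ' hσ' (isRingHomDeformation_expMap φ₀ 0) hφ₀ f g⟩
    (fun n d hd => by
      have hΦ := isRingHomDeformation_expMap φ₀ d
      obtain ⟨ξ, hξadd, hξmul, hξ⟩ := hH2 (fun a b => -obstruction π σ (expMap φ₀ d) (n + 1) a b)
        (fun a b => by rw [obstruction_antisymm hπ' hσ', neg_neg])
        (fun a b c => by rw [obstruction_add_left hπ' hσ', neg_add])
        (fun a b c => by rw [obstruction_mul_left hπ' hσ' hΦ hd]; ring)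
        (fun a b c => by
          simp only [hσ'.neg_right₀]
          linear_combination -obstruction_cyclic hπ' hσ' hΦ hd a b c)
      exact ⟨d + Pi.single n (hl ξ), fun k hk => by simp [Pi.single_eq_of_ne hk.ne],
        X_pow_dvd_poissonDefect_expMap_add_single hπ' hσ' hd hξ (hlsec ξ hξadd hξmul)⟩)
  refine ⟨formalDerivation d, isFormalDer_formalDerivation d, fun f g => ?_⟩
  have hdefect : poissonDefect π σ (expMap φ₀ d) f g = 0 :=
    eq_of_forall_X_pow_succ_dvd_sub fun n => by simpa using hd n f g
  exact (sub_eq_zero.1 hdefect).symm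

theorem stmt_9 {K A B : Type*} [Field K] [CharZero K] [CommRing A] [CommRing B]
    [Algebra K B]
    (π₀ : A → A → A) (σ₀ : B → B → B)
    (hπ₀ : IsPoissonBr π₀) (hσ₀ : IsPoissonBr σ₀)
    (φ₀ : A →+* B) (hφ₀ : ∀ x y, φ₀ (π₀ x y) = σ₀ (φ₀ x) (φ₀ y))
    -- a horizontal lift along φ₀ : an A-linear right inverse of φ₀* on 1-cochains
    (hl : (A → B) → Derivation K B B)
    (hlsec : ∀ ξ : A → B,
      (∀ x y, ξ (x + y) = ξ x + ξ y) →
      (∀ x y, ξ (x * y) = φ₀ x * ξ y + ξ x * φ₀ y) →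
      ∀ a, hl ξ (φ₀ a) = ξ a)
    (hlA : ∀ (ξ : A → B) (a : A) (b : B), hl (fun x => φ₀ a * ξ x) b = φ₀ a * hl ξ b)
    -- H²_{CE,der}(A,B) = 0 : closed multiderivation 2-cochains are exact
    (hH2 : ∀ R : A → A → B,
      (∀ x y, R x y = - R y x) →
      (∀ x y z, R (x + y) z = R x z + R y z) →
      (∀ x y z, R (x * y) z = φ₀ x * R y z + R x z * φ₀ y) →
      (∀ a₁ a₂ a₃,
        σ₀ (φ₀ a₁) (R a₂ a₃) + σ₀ (φ₀ a₂) (R a₃ a₁) + σ₀ (φ₀ a₃) (R a₁ a₂)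
        + R a₁ (π₀ a₂ a₃) + R a₂ (π₀ a₃ a₁) + R a₃ (π₀ a₁ a₂) = 0) →
      ∃ ξ : A → B,
        (∀ x y, ξ (x + y) = ξ x + ξ y) ∧
        (∀ x y, ξ (x * y) = φ₀ x * ξ y + ξ x * φ₀ y) ∧
        ∀ a₁ a₂, R a₁ a₂ =
          σ₀ (φ₀ a₁) (ξ a₂) - σ₀ (φ₀ a₂) (ξ a₁) - ξ (π₀ a₁ a₂))
    -- formal Poisson deformations of π₀ and σ₀
    (π : PowerSeries A → PowerSeries A → PowerSeries A)
    (σ : PowerSeries B → PowerSeries B → PowerSeries B)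
    (hπ : IsPoissonBr π) (hσ : IsPoissonBr σ)
    (hπX : ∀ f g, π (PowerSeries.X * f) g = PowerSeries.X * π f g)
    (hσX : ∀ f g, σ (PowerSeries.X * f) g = PowerSeries.X * σ f g)
    (hπ0 : ∀ a b : A, PowerSeries.coeff (R := A) 0 (π (PowerSeries.C (R := A) a) (PowerSeries.C (R := A) b))
       = π₀ a b)
    (hσ0 : ∀ a b : B, PowerSeries.coeff (R := B) 0 (σ (PowerSeries.C (R := B) a) (PowerSeries.C (R := B) b))
       = σ₀ a b) :
    ∃ D : PowerSeries B → PowerSeries B, IsFormalDer K D ∧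
      ∀ f g : PowerSeries A,
        expF K D (PowerSeries.map (φ₀ : A →+* B) (π f g)) =
          σ (expF K D (PowerSeries.map (φ₀ : A →+* B) f))
            (expF K D (PowerSeries.map (φ₀ : A →+* B) g)) :=
  stmt_9_general π₀ σ₀ φ₀ hφ₀ hl hlsec hH2 π σ hπ hσ hπX hσX hπ0 hσ0
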